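/- Let R be a commutative ring and c ∈ R a nilpotent element with c^d = 0. Then in the ring of formal power series R[[t]], the product (1 - t²)^{d+1} · Σ_{i≥0} (1-c)^i t^{2i} equals the polynomial Σ_{i=0}^{d} (-1)^i c^i (1-t²)^{d-i} t^{2i}. In particular, (1-t²)^{d+1} · Σ_{i≥0}(1-c)^i t^{2i} is a polynomial in t of degree at most 2d+2. -/

import Mathlib

open PowerSeries Polynomial

/-- For `c ∈ R` with `c^d = 0` (`d ≥ 1`), in `R[[t]]` the product of
`(1-t²)^{d+1}` with the series `Σ_{i≥0} (1-c)^i t^{2i}` equals the polynomial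
`N(t) = Σ_{i=0}^{d} (-1)^i c^i (1-t²)^{d-i} t^{2i}`; in particular this
product is a polynomial in `t` of degree at most `2d+2`. -/
theorem one_sub_t_sq_pow_mul_series {R : Type*} [CommRing R] (c : R) (d : ℕ)
    (hd : 1 ≤ d) (hc : c ^ d = 0) :
    (1 - (PowerSeries.X : PowerSeries R) ^ 2) ^ (d + 1) *
        PowerSeries.mk (fun n => if n % 2 = 0 then (1 - c) ^ (n / 2) else 0)
      = ((∑ i ∈ Finset.range (d + 1),
            Polynomial.C ((-1) ^ i * c ^ i) * (1 - Polynomial.X ^ 2) ^ (d - i)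
              * Polynomial.X ^ (2 * i) : R[X]) : PowerSeries R) ∧
    ∃ p : R[X], p.degree ≤ (2 * d + 2 : ℕ) ∧
      (1 - (PowerSeries.X : PowerSeries R) ^ 2) ^ (d + 1) *
          PowerSeries.mk (fun n => if n % 2 = 0 then (1 - c) ^ (n / 2) else 0)
        = (p : PowerSeries R) := by
  set S : PowerSeries R :=
    PowerSeries.mk (fun n => if n % 2 = 0 then (1 - c) ^ (n / 2) else 0) with hS
  set N : R[X] := ∑ i ∈ Finset.range (d + 1),
      Polynomial.C ((-1) ^ i * c ^ i) * (1 - Polynomial.X ^ 2) ^ (d - i)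
        * Polynomial.X ^ (2 * i) with hN
  -- S is the inverse of 1 - (1-c) X^2
  have key : (1 - PowerSeries.C (1 - c) * PowerSeries.X ^ 2) * S = 1 := by
    ext n
    rw [sub_mul, one_mul, map_sub, mul_assoc, PowerSeries.coeff_C_mul,
      PowerSeries.coeff_X_pow_mul']
    match n with
    | 0 => simp [hS]
    | 1 => simp [hS, Nat.one_mod]
    | (n + 2) =>
      have h2 : 2 ≤ n + 2 := by omega
      rw [if_pos h2]
      simp only [hS, PowerSeries.coeff_mk, Nat.add_sub_cancel]
      rcases Nat.even_or_odd n with he | ho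
      · have h0 : n % 2 = 0 := Nat.even_iff.mp he
        have h1 : (n + 2) % 2 = 0 := by omega
        have hdiv : (n + 2) / 2 = n / 2 + 1 := by omega
        rw [if_pos h1, if_pos h0, hdiv, pow_succ]
        have : (1 : ℕ) ≤ n + 2 := by omega
        simp [PowerSeries.coeff_one, Nat.succ_ne_zero]
        ring
      · have h0 : n % 2 ≠ 0 := by rw [Nat.odd_iff.mp ho]; omega
        have h1 : (n + 2) % 2 ≠ 0 := by omega
        rw [if_neg h1, if_neg h0]
        simp [PowerSeries.coeff_one]
  -- polynomial identity: N * (1 - (1-c) X^2) = (1 - X^2)^(d+1)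
  have hpoly : N * (1 - Polynomial.C (1 - c) * Polynomial.X ^ 2)
      = (1 - Polynomial.X ^ 2) ^ (d + 1) := by
    have hsplit : (1 - Polynomial.C (1 - c) * Polynomial.X ^ 2 : R[X])
        = (1 - Polynomial.X ^ 2) + Polynomial.C c * Polynomial.X ^ 2 := by
      rw [map_sub, map_one]; ring
    set F : ℕ → R[X] := fun i =>
      Polynomial.C ((-1) ^ i * c ^ i) * (1 - Polynomial.X ^ 2) ^ (d + 1 - i)
        * Polynomial.X ^ (2 * i) with hF
    have step : ∀ i ∈ Finset.range (d + 1),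
        (Polynomial.C ((-1) ^ i * c ^ i) * (1 - Polynomial.X ^ 2) ^ (d - i)
          * Polynomial.X ^ (2 * i)) * (1 - Polynomial.C (1 - c) * Polynomial.X ^ 2)
        = F i - F (i + 1) := by
      intro i hi
      rw [Finset.mem_range] at hi
      have hle : i ≤ d := by omega
      have h1 : d + 1 - i = (d - i) + 1 := by omega
      have h2 : d + 1 - (i + 1) = d - i := by omega
      rw [hsplit, hF]
      simp only [h1, h2]
      rw [pow_succ (1 - Polynomial.X ^ 2 : R[X]) (d - i)]
      simp only [pow_succ, map_mul, map_neg, map_one, Polynomial.C_neg, Polynomial.C_mul]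
      ring
    rw [hN, Finset.sum_mul, Finset.sum_congr rfl step, Finset.sum_range_sub' F]
    have hc1 : c ^ (d + 1) = 0 := by rw [pow_succ, hc, zero_mul]
    simp [hF, ← map_pow, hc1]
  -- transfer to power series
  have hps : (N : PowerSeries R) * (1 - PowerSeries.C (1 - c) * PowerSeries.X ^ 2)
      = (1 - (PowerSeries.X : PowerSeries R) ^ 2) ^ (d + 1) := by
    have := congrArg (Polynomial.coeToPowerSeries.ringHom (R := R)) hpoly
    simpa [map_mul, map_sub, map_one, map_pow] using this
  have main : (1 - (PowerSeries.X : PowerSeries R) ^ 2) ^ (d + 1) * S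
      = (N : PowerSeries R) := by
    rw [← hps, mul_assoc, key, mul_one]
  refine ⟨main, N, ?_, main⟩
  -- degree bound
  apply (Polynomial.degree_sum_le _ _).trans
  apply Finset.sup_le
  intro i hi
  rw [Finset.mem_range] at hi
  apply (Polynomial.degree_mul_le _ _).trans
  have h1 : ((Polynomial.C ((-1) ^ i * c ^ i) * (1 - Polynomial.X ^ 2) ^ (d - i)
      : R[X])).degree ≤ (2 * (d - i) : ℕ) := by
    apply (Polynomial.degree_mul_le _ _).trans
    have := Polynomial.degree_C_le (a := ((-1) ^ i * c ^ i : R))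
    have h2 : ((1 - Polynomial.X ^ 2 : R[X]) ^ (d - i)).degree ≤ (2 * (d - i) : ℕ) := by
      apply (Polynomial.degree_pow_le _ _).trans
      have : (1 - Polynomial.X ^ 2 : R[X]).degree ≤ (2 : ℕ) := by
        apply (Polynomial.degree_sub_le _ _).trans
        rw [max_le_iff]
        refine ⟨Polynomial.degree_one_le.trans ?_, Polynomial.degree_X_pow_le 2⟩
        exact_mod_cast Nat.zero_le 2
      calc ((d - i) : ℕ) • (1 - Polynomial.X ^ 2 : R[X]).degree
          ≤ (d - i) • ((2 : ℕ) : WithBot ℕ) := nsmul_le_nsmul_right this _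
        _ = ((2 * (d - i) : ℕ) : WithBot ℕ) := by
            simp [nsmul_eq_mul, mul_comm]
    calc _ ≤ (0 : WithBot ℕ) + ((2 * (d - i) : ℕ) : WithBot ℕ) := add_le_add this h2
      _ = ((2 * (d - i) : ℕ) : WithBot ℕ) := by rw [zero_add]
  have h3 : ((Polynomial.X : R[X]) ^ (2 * i)).degree ≤ ((2 * i : ℕ) : WithBot ℕ) :=
    Polynomial.degree_X_pow_le _
  calc _ ≤ ((2 * (d - i) : ℕ) : WithBot ℕ) + ((2 * i : ℕ) : WithBot ℕ) := add_le_add h1 h3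
    _ = ((2 * (d - i) + 2 * i : ℕ) : WithBot ℕ) := by rw [← Nat.cast_add]
    _ ≤ ((2 * d + 2 : ℕ) : WithBot ℕ) := by
        rw [Nat.cast_le]; omega
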